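/- Let d be odd. The phase space point operator at the origin, A(0) = d^{-n} Σ_{b∈V} χ(-[0,b]) w(b)† = d^{-n} Σ_b w(b)†, acts on basis states as the parity operator: A(0)|q⟩ = |-q⟩ for all q ∈ (ZMod d)^n. In particular A(0)² = 1. -/
import Mathlib

open scoped BigOperators
open Finset Matrix
open scoped ComplexOrder

attribute [instance] Classical.propDecidable

/-- The character `χ(t) = exp(2πit/d)` on `ZMod d`. -/
noncomputable def chi (d : ℕ) (t : ZMod d) : ℂ :=
  Complex.exp (2 * Real.pi * Complex.I * (t.val : ℂ) / (d : ℂ))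

/-- The standard symplectic form on `(Fin n → R) × (Fin n → R)`. -/
def symp (R : Type) [CommRing R] (n : ℕ) (v w : (Fin n → R) × (Fin n → R)) : R :=
  (∑ i, v.1 i * w.2 i) - ∑ i, v.2 i * w.1 i

/-- Single-particle Weyl operator `w(p,q) = χ(-2⁻¹pq) ẑ(p) x̂(q)` on `ℂ^d`. -/
noncomputable def weyl1 (d : ℕ) (p q : ZMod d) : Matrix (ZMod d) (ZMod d) ℂ :=
  Matrix.of fun x y => chi d (-(2⁻¹ : ZMod d) * p * q + p * x) * (if y = x - q then 1 else 0)

/-- Multi-particle Weyl operator on `(ℂ^d)^{⊗n}` in coordinates. -/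
noncomputable def weyl (d n : ℕ) (p q : Fin n → ZMod d) :
    Matrix (Fin n → ZMod d) (Fin n → ZMod d) ℂ :=
  Matrix.of fun x y =>
    chi d (-(2⁻¹ : ZMod d) * (∑ i, p i * q i) + ∑ i, p i * x i) * (if y = x - q then 1 else 0)

/-- Weyl operator indexed by a phase space point. -/
noncomputable def weylV (d n : ℕ) (v : (Fin n → ZMod d) × (Fin n → ZMod d)) :
    Matrix (Fin n → ZMod d) (Fin n → ZMod d) ℂ :=
  weyl d n v.1 v.2

/-- Action of the Weyl operator on wave functions:
`(w(p,q)ψ)(y) = χ(-2⁻¹pq + py) ψ(y-q)`. -/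
noncomputable def weylAct (d n : ℕ) (p q : Fin n → ZMod d) (ψ : (Fin n → ZMod d) → ℂ) :
    (Fin n → ZMod d) → ℂ :=
  fun y => chi d (-(2⁻¹ : ZMod d) * (∑ i, p i * q i) + ∑ i, p i * y i) * ψ (y - q)

/-- Wigner function of a pure state `ψ`. -/
noncomputable def wignerPure (d n : ℕ) [NeZero d] (ψ : (Fin n → ZMod d) → ℂ)
    (p q : Fin n → ZMod d) : ℂ :=
  ((d : ℂ) ^ n)⁻¹ * ∑ ξ : Fin n → ZMod d, chi d (-(∑ i, ξ i * p i)) *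
    (starRingEnd ℂ) (ψ (q - (2⁻¹ : ZMod d) • ξ)) * ψ (q + (2⁻¹ : ZMod d) • ξ)

/-- Phase space point operators `A(a) = d^{-n} Σ_b χ(-[a,b]) w(b)†`. -/
noncomputable def pspo (d n : ℕ) [NeZero d] (a : (Fin n → ZMod d) × (Fin n → ZMod d)) :
    Matrix (Fin n → ZMod d) (Fin n → ZMod d) ℂ :=
  ((d : ℂ) ^ n)⁻¹ • ∑ b : (Fin n → ZMod d) × (Fin n → ZMod d),
    chi d (-(symp (ZMod d) n a b)) • (weylV d n b)ᴴ

/- ---- auxiliary lemmas ---- -/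

lemma chi_eq_std (d : ℕ) [NeZero d] (t : ZMod d) : chi d t = ZMod.stdAddChar t := by
  have h := ZMod.stdAddChar_coe (N := d) (t.val : ℤ)
  have h2 : (((t.val : ℤ) : ZMod d)) = t := by
    push_cast [ZMod.natCast_val, ZMod.cast_id]
    rfl
  rw [h2] at h
  push_cast at h
  exact h.symm

lemma chi_zero' (d : ℕ) [NeZero d] : chi d 0 = 1 := by
  rw [chi_eq_std]; exact AddChar.map_zero_eq_one _

lemma chi_add' (d : ℕ) [NeZero d] (a b : ZMod d) :
    chi d (a + b) = chi d a * chi d b := by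
  rw [chi_eq_std, chi_eq_std, chi_eq_std]; exact AddChar.map_add_eq_mul _ a b

lemma chi_sum' (d : ℕ) [NeZero d] {ι : Type*} (s : Finset ι) (f : ι → ZMod d) :
    chi d (∑ i ∈ s, f i) = ∏ i ∈ s, chi d (f i) := by
  induction s using Finset.cons_induction with
  | empty => simp [chi_zero']
  | cons a s ha ih => rw [Finset.sum_cons, Finset.prod_cons, chi_add', ih]

lemma chi_conj' (d : ℕ) [NeZero d] (t : ZMod d) :
    (starRingEnd ℂ) (chi d t) = chi d (-t) := by
  have h1 : chi d (-t) * chi d t = 1 := by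
    rw [← chi_add', neg_add_cancel, chi_zero']
  have h2 : (starRingEnd ℂ) (chi d t) * chi d t = 1 := by
    rw [chi, ← Complex.exp_conj, ← Complex.exp_add,
      show (starRingEnd ℂ) (2 * (Real.pi : ℂ) * Complex.I * ((t.val : ℕ) : ℂ) / (d : ℂ)) +
          2 * (Real.pi : ℂ) * Complex.I * ((t.val : ℕ) : ℂ) / (d : ℂ) = 0 by
        simp only [map_div₀, _root_.map_mul, Complex.conj_I, Complex.conj_ofReal, map_ofNat,
          Complex.conj_natCast]
        ring, Complex.exp_zero]
  have h0 : chi d t ≠ 0 := by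
    intro h; rw [h, mul_zero] at h2; norm_num at h2
  exact mul_right_cancel₀ h0 (h2.trans h1.symm)

lemma sum_chi' (d : ℕ) [NeZero d] (c : ZMod d) :
    ∑ t : ZMod d, chi d (t * c) = if c = 0 then (d : ℂ) else 0 := by
  simp only [chi_eq_std]
  split_ifs with h
  · simp [h, ZMod.card]
  · have hs : ∀ t : ZMod d, ZMod.stdAddChar (t * c)
        = (AddChar.mulShift (ZMod.stdAddChar (N := d)) c) t := by
      intro t; rw [AddChar.mulShift_apply, mul_comm]
    simp only [hs]
    exact AddChar.sum_eq_zero_of_ne_one (ZMod.isPrimitive_stdAddChar d h)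

lemma sum_chi_pi' (d n : ℕ) [NeZero d] (c : Fin n → ZMod d) :
    ∑ p : Fin n → ZMod d, chi d (∑ i, p i * c i) = if c = 0 then ((d : ℂ)) ^ n else 0 := by
  have h1 : ∀ p : Fin n → ZMod d, chi d (∑ i, p i * c i) = ∏ i, chi d (p i * c i) :=
    fun p => chi_sum' d _ _
  simp only [h1]
  have hswap := Finset.sum_prod_piFinset (Finset.univ : Finset (ZMod d))
    (fun i t => chi d (t * c i))
  rw [Fintype.piFinset_univ] at hswap
  rw [hswap]
  simp only [sum_chi']
  by_cases h : c = 0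
  · simp [h]
  · rw [if_neg h]
    obtain ⟨i, hi⟩ : ∃ i, c i ≠ 0 := by
      by_contra hc; push_neg at hc; exact h (funext hc)
    exact Finset.prod_eq_zero (Finset.mem_univ i) (by rw [if_neg hi])

lemma pspo_zero_eq (d n : ℕ) [NeZero d] (hd : Odd d) :
    pspo d n 0 = Matrix.of (fun x y => if y = -x then (1 : ℂ) else 0) := by
  have hdc : ((d : ℂ)) ^ n ≠ 0 :=
    pow_ne_zero _ (Nat.cast_ne_zero.2 (NeZero.ne d))
  have hcop : Nat.Coprime 2 d :=
    (Nat.prime_two.coprime_iff_not_dvd).mpr (by rw [Nat.odd_iff] at hd; omega)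
  have hu : IsUnit (2 : ZMod d) := by
    have h22 : ((2 : ℕ) : ZMod d) = (2 : ZMod d) := by norm_cast
    rw [← h22, ZMod.isUnit_iff_coprime]; exact hcop
  have h2 : (2 : ZMod d) * (2 : ZMod d)⁻¹ = 1 := ZMod.mul_inv_of_unit _ hu
  ext x y
  have hsymp : ∀ b : (Fin n → ZMod d) × (Fin n → ZMod d), symp (ZMod d) n 0 b = 0 := by
    intro b; simp [symp]
  have hite : ∀ q : Fin n → ZMod d,
      (starRingEnd ℂ) (if x = y - q then (1 : ℂ) else 0) = if q = y - x then 1 else 0 := by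
    intro q
    by_cases h : x = y - q
    · rw [if_pos h, if_pos (by rw [h]; abel), _root_.map_one]
    · rw [if_neg h, if_neg (fun hh => h (by rw [hh]; abel)), map_zero]
  simp only [pspo, Matrix.smul_apply, Matrix.sum_apply, smul_eq_mul, hsymp, neg_zero,
    chi_zero', one_mul, Matrix.conjTranspose_apply, weylV, weyl, Matrix.of_apply,
    Complex.star_def, _root_.map_mul, chi_conj', hite]
  rw [Fintype.sum_prod_type]
  simp only [mul_ite, mul_one, mul_zero, Finset.sum_ite_eq', Finset.mem_univ, if_true]
  set c : Fin n → ZMod d := fun i => (2⁻¹ : ZMod d) * (y i - x i) - y i with hc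
  have harg : ∀ p : Fin n → ZMod d,
      -(-(2⁻¹ : ZMod d) * (∑ i, p i * (y - x) i) + ∑ i, p i * y i) = ∑ i, p i * c i := by
    intro p
    have hterm : ∀ i, (2⁻¹ : ZMod d) * (p i * (y - x) i) - p i * y i = p i * c i := by
      intro i; simp only [Pi.sub_apply, hc]; ring
    calc -(-(2⁻¹ : ZMod d) * (∑ i, p i * (y - x) i) + ∑ i, p i * y i)
        = (2⁻¹ : ZMod d) * (∑ i, p i * (y - x) i) - ∑ i, p i * y i := by ring
      _ = ∑ i, ((2⁻¹ : ZMod d) * (p i * (y - x) i) - p i * y i) := by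
          rw [Finset.mul_sum, Finset.sum_sub_distrib]
      _ = ∑ i, p i * c i := Finset.sum_congr rfl fun i _ => hterm i
  simp only [harg]
  rw [sum_chi_pi']
  have hcy : (c = 0) ↔ (y = -x) := by
    constructor
    · intro h0
      funext i
      have hci : (2⁻¹ : ZMod d) * (y i - x i) - y i = 0 := by
        have := congrFun h0 i
        simpa [hc] using this
      have : y i = -(x i) := by
        linear_combination (-2 : ZMod d) * hci + (y i - x i) * h2
      simpa using this
    · intro h0
      funext i
      have hyi : y i = -(x i) := by rw [h0]; rfl
      show (2⁻¹ : ZMod d) * (y i - x i) - y i = 0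
      rw [hyi]
      linear_combination (-(x i)) * h2
  rw [if_congr hcy rfl rfl]
  split_ifs with h
  · rw [inv_mul_cancel₀ hdc]
  · rw [mul_zero]

/-- The phase space point operator at the origin is the parity operator:
`A(0)|q⟩ = |-q⟩`; in particular `A(0)² = 1`. -/
theorem pspo_zero_parity (d n : ℕ) [NeZero d] (hd : Odd d) :
    (∀ q : Fin n → ZMod d,
      (pspo d n 0).mulVec (fun x => if x = q then (1 : ℂ) else 0) =
        fun x => if x = -q then (1 : ℂ) else 0) ∧
    pspo d n 0 * pspo d n 0 = 1 := by
  have hP := pspo_zero_eq d n hd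
  constructor
  · intro q
    funext x
    rw [hP]
    simp only [Matrix.mulVec, dotProduct, Matrix.of_apply, ite_mul, one_mul, zero_mul,
      Finset.sum_ite_eq', Finset.mem_univ, if_true]
    by_cases h : x = -q
    · have h' : -x = q := by rw [h]; simp
      simp [h, h']
    · have h' : ¬(-x = q) := fun hh => h (by rw [← hh]; simp)
      simp [h, h']
  · rw [hP]
    ext x y
    simp only [Matrix.mul_apply, Matrix.of_apply, ite_mul, one_mul, zero_mul,
      Finset.sum_ite_eq', Finset.mem_univ, if_true, Matrix.one_apply, neg_neg]
    by_cases h : x = y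
    · subst h
      simp
    · have h' : ¬(y = x) := fun hh => h hh.symm
      simp [h, h']
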